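/- arXiv:0809.2059 — 5 statements merged into one kernel-verified Lean document; each statement's English description precedes it below -/
import Mathlib

section
/- Let N ≥ 1, α₀ < 0 ≤ αᵢ (i = 1,…,N), κᵢ > 0, c > 0, and suppose λ₀ = x₀ + i·y₀ with y₀ ≠ 0 is a nonreal root of the characteristic function D(λ) = c·λ + α₀ + Σᵢ αᵢ·e^{−κᵢ·λ}. Then x₀ is strictly less than any real root of D; that is, if D(r) = 0 for a real number r, then x₀ < r. -/
/-!
Let `f(x) = c x + α₀ + ∑ αᵢ e^{-κᵢ x}` be the restriction of `D` to the real line; it is convex.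
The imaginary part of `D(x₀ + i y₀) = 0` reads `c y₀ = ∑ αᵢ e^{-κᵢ x₀} sin (κᵢ y₀)`, and `sin t ≤ t`
turns it into `f'(x₀) ≤ 0`. Subtracting the real part of the same equation from `f(x₀)` gives
`f(x₀) = ∑ αᵢ e^{-κᵢ x₀} (1 - cos (κᵢ y₀)) > 0`, the sum being positive because some `sin (κᵢ y₀)`
is nonzero. A real root `r ≤ x₀` would then contradict the tangent-line bound
`f(r) ≥ f(x₀) + f'(x₀) (r - x₀) > 0`.
-/

open Real Filter Set Topology

open Finset

section Trigonometric

variable {ι : Type*} [Fintype ι] (w κ : ι → ℝ)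

lemma sum_mul_sin_le {y : ℝ} (hw : ∀ i, 0 ≤ w i) (hκ : ∀ i, 0 ≤ κ i) (hy : 0 ≤ y) :
    ∑ i, w i * sin (κ i * y) ≤ (∑ i, w i * κ i) * y := by
  rw [sum_mul]
  refine sum_le_sum fun i _ ↦ ?_
  rw [mul_assoc]
  exact mul_le_mul_of_nonneg_left (sin_le (mul_nonneg (hκ i) hy)) (hw i)

lemma le_sum_mul_of_mul_eq_sum_mul_sin {c y : ℝ} (hw : ∀ i, 0 ≤ w i) (hκ : ∀ i, 0 ≤ κ i)
    (hy : y ≠ 0) (h : c * y = ∑ i, w i * sin (κ i * y)) : c ≤ ∑ i, w i * κ i := by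
  wlog hy_pos : 0 < y generalizing y
  · refine this (y := -y) (neg_ne_zero.2 hy) ?_ (by grind)
    simp only [mul_neg, sin_neg, sum_neg_distrib, h]
  have := sum_mul_sin_le w κ hw hκ hy_pos.le
  exact le_of_mul_le_mul_right (h ▸ this) hy_pos

lemma sum_mul_one_sub_cos_pos (θ : ι → ℝ) (hw : ∀ i, 0 ≤ w i)
    (h : ∑ i, w i * sin (θ i) ≠ 0) : 0 < ∑ i, w i * (1 - cos (θ i)) := by
  obtain ⟨i, -, hi⟩ := exists_ne_zero_of_sum_ne_zero h
  have hwi : 0 < w i := (hw i).lt_of_ne' (left_ne_zero_of_mul hi)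
  have hcos : cos (θ i) ≠ 1 := fun h1 ↦ right_ne_zero_of_mul hi (sin_eq_zero_iff_cos_eq.2 (.inl h1))
  refine sum_pos' (fun j _ ↦ mul_nonneg (hw j) (sub_nonneg.2 (cos_le_one _))) ⟨i, mem_univ i, ?_⟩
  exact mul_pos hwi (sub_pos.2 ((cos_le_one _).lt_of_ne hcos))

end Trigonometric

section CharacteristicFunction

variable {ι : Type*} [Fintype ι] (c α₀ : ℝ) (α κ : ι → ℝ)

noncomputable def charFun (z : ℂ) : ℂ :=
  c * z + α₀ + ∑ i, (α i : ℂ) * Complex.exp (-(κ i : ℂ) * z)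

noncomputable def charFunReal (x : ℝ) : ℝ :=
  c * x + α₀ + ∑ i, α i * exp (-(κ i * x))

lemma charFun_re (x y : ℝ) :
    (charFun c α₀ α κ (x + y * Complex.I)).re =
      c * x + α₀ + ∑ i, α i * exp (-(κ i * x)) * cos (κ i * y) := by
  simp [charFun, Complex.exp_re, Complex.re_sum, mul_assoc]

lemma charFun_im (x y : ℝ) :
    (charFun c α₀ α κ (x + y * Complex.I)).im =
      c * y - ∑ i, α i * exp (-(κ i * x)) * sin (κ i * y) := by
  simp [charFun, Complex.exp_im, Complex.im_sum, mul_assoc, sub_eq_add_neg]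

lemma charFun_ofReal_re (x : ℝ) : (charFun c α₀ α κ x).re = charFunReal c α₀ α κ x := by
  simpa [charFunReal] using charFun_re c α₀ α κ x 0

lemma charFunReal_tangent_le (hα : ∀ i, 0 ≤ α i) (x r : ℝ) :
    charFunReal c α₀ α κ x + (c - ∑ i, α i * exp (-(κ i * x)) * κ i) * (r - x) ≤
      charFunReal c α₀ α κ r := by
  have hterm : ∀ i, α i * exp (-(κ i * x)) - α i * exp (-(κ i * x)) * κ i * (r - x) ≤
      α i * exp (-(κ i * r)) := fun i ↦ by
    have hexp : exp (-(κ i * r)) = exp (-(κ i * x)) * exp (-(κ i * (r - x))) := by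
      rw [← exp_add]; ring_nf
    have := mul_le_mul_of_nonneg_left (add_one_le_exp (-(κ i * (r - x)))) (exp_pos (-(κ i * x))).le
    rw [hexp]
    nlinarith [mul_le_mul_of_nonneg_left this (hα i)]
  have hsum := sum_le_sum fun i (_ : i ∈ Finset.univ) ↦ hterm i
  rw [sum_sub_distrib, ← sum_mul] at hsum
  unfold charFunReal
  linarith

end CharacteristicFunction

theorem stmt1_general (N : ℕ) (c α₀ : ℝ) (α κ : Fin N → ℝ)
    (hc : 0 < c) (hα : ∀ i, 0 ≤ α i) (hκ : ∀ i, 0 < κ i)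
    (D : ℂ → ℂ)
    (hD : ∀ z : ℂ, D z = (c : ℂ) * z + (α₀ : ℂ) +
      ∑ i, (α i : ℂ) * Complex.exp (-(κ i : ℂ) * z))
    (x₀ y₀ : ℝ) (hy₀ : y₀ ≠ 0)
    (hroot : D ((x₀ : ℂ) + (y₀ : ℂ) * Complex.I) = 0) :
    ∀ r : ℝ, D (r : ℂ) = 0 → x₀ < r := by
  intro r hr
  obtain rfl : D = charFun c α₀ α κ := funext hD
  set w := fun i ↦ α i * exp (-(κ i * x₀))
  have hw : ∀ i, 0 ≤ w i := fun i ↦ mul_nonneg (hα i) (exp_pos _).le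
  have hre := charFun_re c α₀ α κ x₀ y₀
  have him := charFun_im c α₀ α κ x₀ y₀
  rw [hroot, Complex.zero_re] at hre
  rw [hroot, Complex.zero_im] at him
  have hslope : c ≤ ∑ i, w i * κ i :=
    le_sum_mul_of_mul_eq_sum_mul_sin w κ hw (fun i ↦ (hκ i).le) hy₀ (by linarith)
  have hgap : 0 < ∑ i, w i * (1 - cos (κ i * y₀)) :=
    sum_mul_one_sub_cos_pos w _ hw (by rw [← sub_eq_zero.1 him.symm]; positivity)
  have hfr : charFunReal c α₀ α κ r = 0 := by rw [← charFun_ofReal_re, hr, Complex.zero_re]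
  have htangent := charFunReal_tangent_le c α₀ α κ hα x₀ r
  by_contra! hrx
  have hfx₀ : 0 < charFunReal c α₀ α κ x₀ := by
    simp only [mul_sub, mul_one, sum_sub_distrib] at hgap
    unfold charFunReal
    linarith
  have hdrop : 0 ≤ (c - ∑ i, w i * κ i) * (r - x₀) :=
    mul_nonneg_of_nonpos_of_nonpos (by linarith) (by linarith)
  linarith

/-- a nonreal root x₀ + i y₀ of the characteristic function
D(λ) = c λ + α₀ + Σ αᵢ e^{−κᵢ λ} has real part strictly less than any real root. -/
theorem stmt1 (N : ℕ) (hN : 0 < N) (c α₀ : ℝ) (α κ : Fin N → ℝ)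
    (hc : 0 < c) (hα₀ : α₀ < 0) (hα : ∀ i, 0 ≤ α i) (hκ : ∀ i, 0 < κ i)
    (D : ℂ → ℂ)
    (hD : ∀ z : ℂ, D z = (c : ℂ) * z + (α₀ : ℂ) +
      ∑ i, (α i : ℂ) * Complex.exp (-(κ i : ℂ) * z))
    (x₀ y₀ : ℝ) (hy₀ : y₀ ≠ 0)
    (hroot : D ((x₀ : ℂ) + (y₀ : ℂ) * Complex.I) = 0) :
    ∀ r : ℝ, D (r : ℂ) = 0 → x₀ < r :=
  stmt1_general N c α₀ α κ hc hα hκ D hD x₀ y₀ hy₀ hroot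
end

section
/- Let N ≥ 1, α₀ < 0 ≤ αᵢ (i = 1,…,N), κᵢ > 0, Σ_{i=0}^N αᵢ > 0, and suppose c ≥ Σ_{i=1}^N αᵢ·κᵢ. Then for the real characteristic function D(x) = c·x + α₀ + Σᵢ αᵢ·e^{−κᵢ·x} one has D(0) > 0 and D'(0) ≥ 0; consequently every real root of D is strictly negative. -/
/-! Bounding each exponential by its tangent line at `0` gives
`D x ≥ (α₀ + ∑ αᵢ) + (c - ∑ αᵢ κᵢ) x`, which is positive for `x ≥ 0`; so `D` has no root in
`[0, ∞)`, and `D' 0 = c - ∑ αᵢ κᵢ ≥ 0` by direct differentiation. -/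

open Real Finset

lemma sum_sub_sum_mul_mul_le_sum_mul_exp {ι : Type*} (s : Finset ι) (α κ : ι → ℝ)
    (hα : ∀ i ∈ s, 0 ≤ α i) (x : ℝ) :
    ∑ i ∈ s, α i - (∑ i ∈ s, α i * κ i) * x ≤ ∑ i ∈ s, α i * exp (-κ i * x) := by
  rw [sum_mul, ← sum_sub_distrib]
  refine sum_le_sum fun i hi => ?_
  calc α i - α i * κ i * x = α i * (-κ i * x + 1) := by ring
    _ ≤ α i * exp (-κ i * x) := mul_le_mul_of_nonneg_left (add_one_le_exp _) (hα i hi)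

lemma linear_add_sum_mul_exp_pos {ι : Type*} (s : Finset ι) (c α₀ : ℝ) (α κ : ι → ℝ)
    (hα : ∀ i ∈ s, 0 ≤ α i) (hsum : 0 < α₀ + ∑ i ∈ s, α i) (hc : ∑ i ∈ s, α i * κ i ≤ c)
    {x : ℝ} (hx : 0 ≤ x) : 0 < c * x + α₀ + ∑ i ∈ s, α i * exp (-κ i * x) := by
  have := sum_sub_sum_mul_mul_le_sum_mul_exp s α κ hα x
  linarith [mul_le_mul_of_nonneg_right hc hx]

lemma hasDerivAt_linear_add_sum_mul_exp {ι : Type*} (s : Finset ι) (c α₀ : ℝ) (α κ : ι → ℝ)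
    (x : ℝ) :
    HasDerivAt (fun y => c * y + α₀ + ∑ i ∈ s, α i * exp (-κ i * y))
      (c - ∑ i ∈ s, α i * κ i * exp (-κ i * x)) x := by
  have hexp : ∀ i ∈ s, HasDerivAt (fun y => α i * exp (-κ i * y))
      (-(α i * κ i * exp (-κ i * x))) x := fun i _ =>
    (((hasDerivAt_id x).const_mul (-κ i)).exp.const_mul (α i)).congr_deriv
      (by simp only [id]; ring)
  have := (((hasDerivAt_id x).const_mul c).add_const α₀).add (HasDerivAt.fun_sum hexp)
  rw [sum_neg_distrib, ← sub_eq_add_neg, mul_one] at this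
  exact this

theorem stmt5_general (N : ℕ) (c α₀ : ℝ) (α κ : Fin N → ℝ)
    (hα : ∀ i, 0 ≤ α i)
    (hsum : 0 < α₀ + ∑ i, α i)
    (hcge : (∑ i, α i * κ i) ≤ c)
    (D : ℝ → ℝ)
    (hD : ∀ x, D x = c * x + α₀ + ∑ i, α i * Real.exp (-(κ i) * x)) :
    0 < D 0 ∧ 0 ≤ deriv D 0 ∧ ∀ x, D x = 0 → x < 0 := by
  obtain rfl : D = _ := funext hD
  have hpos : ∀ x, 0 ≤ x → 0 < c * x + α₀ + ∑ i, α i * exp (-κ i * x) := fun x hx =>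
    linear_add_sum_mul_exp_pos _ c α₀ α κ (fun i _ => hα i) hsum hcge hx
  refine ⟨hpos 0 le_rfl, ?_, fun x hx => not_le.1 fun h => (hpos x h).ne' hx⟩
  rw [(hasDerivAt_linear_add_sum_mul_exp _ c α₀ α κ 0).deriv]
  simpa using hcge

/-- if c ≥ Σ αᵢ κᵢ then D(0) > 0 and D'(0) ≥ 0, and every real root
of D is strictly negative. -/
theorem stmt5 (N : ℕ) (hN : 0 < N) (c α₀ : ℝ) (α κ : Fin N → ℝ)
    (hc : 0 < c) (hα₀ : α₀ < 0) (hα : ∀ i, 0 ≤ α i) (hκ : ∀ i, 0 < κ i)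
    (hsum : 0 < α₀ + ∑ i, α i)
    (hcge : (∑ i, α i * κ i) ≤ c)
    (D : ℝ → ℝ)
    (hD : ∀ x, D x = c * x + α₀ + ∑ i, α i * Real.exp (-(κ i) * x)) :
    0 < D 0 ∧ 0 ≤ deriv D 0 ∧ ∀ x, D x = 0 → x < 0 :=
  stmt5_general N c α₀ α κ hα hsum hcge D hD
end

section
/- Suppose g : ℝ^{N+1} → ℝ satisfies condition (G3): there are M₀ > 0 and η ∈ (0,1) such that whenever |s₀| = max_{0≤i≤N}|sᵢ| and |s₀| ≥ M₀, then |g(s) + s₀| ≤ η·|s₀|. Let M ≥ M₀ and let φ : ℝ → ℝ be a C¹ solution of c·φ'(x) = −g(Φ(x)) (c > 0) with φ(−∞) = 1, and suppose x₀ = inf{x : |φ(x)| ≥ M} is finite. Then |φ(x₀)| = M and φ(x₀)·g(Φ(x₀)) < 0 with |g(Φ(x₀))| ≥ (1−η)·M; in particular d/dx |φ(x)| at x₀ is at least (1−η)·M₀/c. -/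
/-!
Everything left of x₀ lies below level M, so by continuity |φ(x₀)| = M while the delayed values
φ(x₀ − κᵢ) are smaller in modulus. Hence (G3) applies at Φ(x₀): g(Φ(x₀)) lies within η·M of
−φ(x₀), which forces the opposite sign and |g(Φ(x₀))| ≥ (1 − η)·M. Since φ(x₀) ≠ 0, |φ| is
differentiable at x₀ and the equation gives c·|φ|'(x₀) = −sign φ(x₀)·g(Φ(x₀)) = |g(Φ(x₀))|.
-/

open Real Filter Set Topology

section FirstHitting

variable {α β : Type*} [LinearOrder α] [LinearOrder β]

theorem lt_of_lt_of_isGLB_setOf_le {f : α → β} {M : β} {x₀ x : α}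
    (hx₀ : IsGLB {x | M ≤ f x} x₀) (hx : x < x₀) : f x < M :=
  not_le.1 fun h => hx.not_ge (hx₀.1 h)

variable [TopologicalSpace α] [OrderTopology α] [DenselyOrdered α] [NoMinOrder α]
  [TopologicalSpace β] [OrderClosedTopology β]

theorem Continuous.apply_eq_of_isGLB_setOf_le {f : α → β} (hf : Continuous f) {M : β} {x₀ : α}
    (hne : {x | M ≤ f x}.Nonempty) (hx₀ : IsGLB {x | M ≤ f x} x₀) : f x₀ = M := by
  have hge : M ≤ f x₀ := hx₀.mem_of_isClosed hne (isClosed_le continuous_const hf)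
  have hbelow : Iio x₀ ⊆ {x | f x ≤ M} := fun _ hx => (lt_of_lt_of_isGLB_setOf_le hx₀ hx).le
  have hle : x₀ ∈ {x | f x ≤ M} := (isClosed_le hf continuous_const).closure_subset_iff.2 hbelow
    (closure_Iio x₀ ▸ self_mem_Iic)
  exact le_antisymm hle hge

end FirstHitting

section Perturbation

variable {R : Type*} [CommRing R] [LinearOrder R] [IsStrictOrderedRing R]

theorem mul_neg_of_abs_add_lt_abs {a b : R} (h : |a + b| < |b|) : b * a < 0 := by
  have := sq_lt_sq.2 h
  nlinarith

theorem one_sub_mul_abs_le_abs_of_abs_add_le {a b η : R} (h : |a + b| ≤ η * |b|) :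
    (1 - η) * |b| ≤ |a| := by
  have := abs_sub_abs_le_abs_sub b (a + b)
  rw [sub_add_cancel_right, abs_neg] at this
  linarith

theorem neg_sign_mul_eq_abs_of_mul_neg {a b : R} (h : a * b < 0) :
    -((SignType.sign a : R) * b) = |b| := by
  rcases mul_neg_iff.1 h with ⟨ha, hb⟩ | ⟨ha, hb⟩
  · simp [sign_pos ha, abs_of_neg hb]
  · simp [sign_neg ha, abs_of_pos hb]

end Perturbation

theorem stmt8_general (N : ℕ) (c M₀ η M : ℝ) (hc : 0 < c)
    (hη : η ∈ Set.Ioo (0:ℝ) 1) (hM : M₀ ≤ M)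
    (κ : Fin N → ℝ) (hκ : ∀ i, 0 < κ i)
    (g : ℝ → (Fin N → ℝ) → ℝ)
    (hG3 : ∀ (s₀ : ℝ) (s : Fin N → ℝ),
      (∀ i, |s i| ≤ |s₀|) → M₀ ≤ |s₀| → |g s₀ s + s₀| ≤ η * |s₀|)
    (φ φ' : ℝ → ℝ)
    (hderiv : ∀ x, HasDerivAt φ (φ' x) x)
    (heq : ∀ x, c * φ' x = - g (φ x) (fun i => φ (x - κ i)))
    (x₀ : ℝ) (hne : {x : ℝ | M ≤ |φ x|}.Nonempty)
    (hx₀ : IsGLB {x : ℝ | M ≤ |φ x|} x₀) :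
    |φ x₀| = M ∧
    φ x₀ * g (φ x₀) (fun i => φ (x₀ - κ i)) < 0 ∧
    (1 - η) * M ≤ |g (φ x₀) (fun i => φ (x₀ - κ i))| ∧
    ∀ d, HasDerivAt (fun x => |φ x|) d x₀ → (1 - η) * M₀ / c ≤ d := by
  set G := g (φ x₀) (fun i => φ (x₀ - κ i))
  have hφ : Continuous φ := continuous_iff_continuousAt.2 fun x => (hderiv x).continuousAt
  have hbelow : ∀ x < x₀, |φ x| < M := fun _ => lt_of_lt_of_isGLB_setOf_le (f := fun x => |φ x|) hx₀
  have habs : |φ x₀| = M := (continuous_abs.comp hφ).apply_eq_of_isGLB_setOf_le hne hx₀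
  have hMpos : 0 < M := (abs_nonneg _).trans_lt (hbelow (x₀ - 1) (by linarith))
  have hG3x₀ : |G + φ x₀| ≤ η * |φ x₀| :=
    hG3 _ _ (fun i => habs ▸ (hbelow _ (by linarith [hκ i])).le) (habs ▸ hM)
  have hsign : φ x₀ * G < 0 := by
    refine mul_neg_of_abs_add_lt_abs (hG3x₀.trans_lt ?_)
    rw [habs]
    exact mul_lt_of_lt_one_left hMpos hη.2
  have hGbig : (1 - η) * M ≤ |G| := habs ▸ one_sub_mul_abs_le_abs_of_abs_add_le hG3x₀
  refine ⟨habs, hsign, hGbig, fun d hd => ?_⟩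
  have hd_eq : d = SignType.sign (φ x₀) * φ' x₀ :=
    hd.unique ((hasDerivAt_abs (left_ne_zero_of_mul hsign.ne)).comp x₀ (hderiv x₀))
  have hcd : c * d = |G| := by
    rw [hd_eq, mul_left_comm, heq x₀, mul_neg, ← neg_sign_mul_eq_abs_of_mul_neg hsign]
  rw [div_le_iff₀ hc, mul_comm d, hcd]
  calc (1 - η) * M₀ ≤ (1 - η) * M := by gcongr; linarith [hη.2]
    _ ≤ |G| := hGbig

/-- from Lemma 1.3 / condition (G3): at the first point x₀ where
|φ| reaches M ≥ M₀, one has |φ(x₀)| = M, φ(x₀) and g(Φ(x₀)) have opposite signs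
with |g(Φ(x₀))| ≥ (1−η)M, and the derivative of |φ| at x₀ is ≥ (1−η)M₀/c. -/
theorem stmt8 (N : ℕ) (c M₀ η M : ℝ) (hc : 0 < c) (hM₀ : 1 < M₀)
    (hη : η ∈ Set.Ioo (0:ℝ) 1) (hM : M₀ ≤ M)
    (κ : Fin N → ℝ) (hκ : ∀ i, 0 < κ i)
    (g : ℝ → (Fin N → ℝ) → ℝ)
    (hG3 : ∀ (s₀ : ℝ) (s : Fin N → ℝ),
      (∀ i, |s i| ≤ |s₀|) → M₀ ≤ |s₀| → |g s₀ s + s₀| ≤ η * |s₀|)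
    (φ φ' : ℝ → ℝ)
    (hderiv : ∀ x, HasDerivAt φ (φ' x) x) (hcont : Continuous φ')
    (heq : ∀ x, c * φ' x = - g (φ x) (fun i => φ (x - κ i)))
    (hbc : Tendsto φ atBot (𝓝 1))
    (x₀ : ℝ) (hne : {x : ℝ | M ≤ |φ x|}.Nonempty)
    (hx₀ : IsGLB {x : ℝ | M ≤ |φ x|} x₀) :
    |φ x₀| = M ∧
    φ x₀ * g (φ x₀) (fun i => φ (x₀ - κ i)) < 0 ∧
    (1 - η) * M ≤ |g (φ x₀) (fun i => φ (x₀ - κ i))| ∧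
    ∀ d, HasDerivAt (fun x => |φ x|) d x₀ → (1 - η) * M₀ / c ≤ d :=
  stmt8_general N c M₀ η M hc hη hM κ hκ g hG3 φ φ' hderiv heq x₀ hne hx₀
end

section
/- Suppose g satisfies condition (G3) with constants M₀ > 1 and η ∈ (0,1). Then any globally defined solution φ : ℝ → ℝ of c·φ'(x) = −g(Φ(x)) (c > 0) satisfying φ(−∞) = 1 either satisfies |φ(x)| ≤ M₀ for all x ∈ ℝ, or satisfies φ(x) → +∞ or φ(x) → −∞ as x → ∞. -/
/-!
Work with `u = φ²`. Condition (G3) says that at a point `x` where `u` attains its maximum over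
`(-∞, x]` with `|φ x| ≥ M₀`, the equation gives `c φ φ' = -φ g(Φ) ≥ (1 - η) φ²`, so `u` is
increasing there. Since `u → 1 < M₀²` at `-∞`, once `u` exceeds `M₀²` at some `x₀`, every
`x ≥ x₀` is such a running maximum: a maximum of `u` on `[a, x]` at a point left of `x` would
have positive derivative. Hence `u' ≥ 2 (1 - η) M₀² / c` on `[x₀, ∞)` and `u → ∞`; being
continuous and eventually nonzero, `φ` keeps one sign and tends to `+∞` or `-∞`.
-/

open Filter Set Topology

def SatisfiesG3 {ι : Type*} (M₀ η : ℝ) (g : ℝ → (ι → ℝ) → ℝ) : Prop :=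
  ∀ (s₀ : ℝ) (s : ι → ℝ), (∀ i, |s i| ≤ |s₀|) → M₀ ≤ |s₀| → |g s₀ s + s₀| ≤ η * |s₀|

theorem SatisfiesG3.one_sub_mul_sq_le {ι : Type*} {M₀ η c : ℝ} {g : ℝ → (ι → ℝ) → ℝ}
    (hG3 : SatisfiesG3 M₀ η g) {κ : ι → ℝ} (hκ : ∀ i, 0 < κ i) {φ : ℝ → ℝ} {x φ'x : ℝ}
    (heq : c * φ'x = -g (φ x) fun i => φ (x - κ i))
    (hmax : IsMaxOn (fun y => φ y ^ 2) (Iic x) x) (hM₀ : M₀ ≤ |φ x|) :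
    (1 - η) * φ x ^ 2 ≤ c * (φ x * φ'x) := by
  have hdelay : ∀ i, |φ (x - κ i)| ≤ |φ x| := fun i =>
    sq_le_sq.1 (hmax (show x - κ i ∈ Iic x by simp [(hκ i).le]))
  set r := g (φ x) (fun i => φ (x - κ i)) + φ x
  have hr : |r| ≤ η * |φ x| := hG3 _ _ hdelay hM₀
  have hcross : φ x * r ≤ η * φ x ^ 2 :=
    calc φ x * r ≤ |φ x| * |r| := by rw [← abs_mul]; exact le_abs_self _
      _ ≤ |φ x| * (η * |φ x|) := mul_le_mul_of_nonneg_left hr (abs_nonneg _)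
      _ = η * φ x ^ 2 := by rw [← sq_abs (φ x)]; ring
  have : c * (φ x * φ'x) = φ x ^ 2 - φ x * r := by
    rw [mul_left_comm, heq]; ring
  linarith

theorem HasDerivAt.exists_mem_Ioc_lt {f : ℝ → ℝ} {f' x y : ℝ} (hf : HasDerivAt f f' x)
    (hf' : 0 < f') (hxy : x < y) : ∃ z ∈ Ioc x y, f x < f z := by
  have hslope : ∀ᶠ t in 𝓝[>] 0, 0 < t⁻¹ • (f (x + t) - f x) :=
    hf.tendsto_slope_zero_right.eventually (lt_mem_nhds hf')
  have hsmall : ∀ᶠ t in 𝓝[>] (0 : ℝ), t < y - x :=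
    nhdsWithin_le_nhds (Iio_mem_nhds (sub_pos.2 hxy))
  obtain ⟨t, hpos, hlt, ht⟩ := (hslope.and (hsmall.and self_mem_nhdsWithin)).exists
  refine ⟨x + t, ⟨by linarith, by linarith⟩, ?_⟩
  rw [smul_eq_mul] at hpos
  have := (pos_iff_pos_of_mul_pos hpos).1 (inv_pos.2 ht)
  linarith

section RunningMaxima

variable {u u' : ℝ → ℝ} {M : ℝ}

theorem isMaxOn_Iic_of_deriv_pos_at_running_max (hderiv : ∀ x, HasDerivAt u (u' x) x)
    (hrec : ∀ x, IsMaxOn u (Iic x) x → M < u x → 0 < u' x)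
    (hbot : ∀ᶠ y in atBot, u y ≤ M) {x₀ x : ℝ} (hx₀ : M < u x₀) (hx : x₀ ≤ x) :
    IsMaxOn u (Iic x) x := by
  obtain ⟨A, hA⟩ := eventually_atBot.1 hbot
  set a := min A x₀
  have hcont : ContinuousOn u (Icc a x) := fun y _ => (hderiv y).continuousAt.continuousWithinAt
  obtain ⟨z, hz, hmax⟩ :=
    isCompact_Icc.exists_isMaxOn (nonempty_Icc.2 ((min_le_right _ _).trans hx)) hcont
  have hMz : M < u z := hx₀.trans_le (hmax ⟨min_le_right _ _, hx⟩)
  have hzrec : IsMaxOn u (Iic z) z := by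
    intro w hw
    rcases le_or_gt w a with hwa | haw
    · exact (hA w (hwa.trans (min_le_left _ _))).trans hMz.le
    · exact hmax ⟨haw.le, (mem_Iic.1 hw).trans hz.2⟩
  obtain rfl : z = x := by
    by_contra hne
    obtain ⟨y, hy, hlt⟩ :=
      (hderiv z).exists_mem_Ioc_lt (hrec z hzrec hMz) (lt_of_le_of_ne hz.2 hne)
    exact (hmax ⟨hz.1.trans hy.1.le, hy.2⟩).not_gt hlt
  exact hzrec

theorem tendsto_atTop_of_le_deriv_at_running_max {δ : ℝ} (hδ : 0 < δ) (hderiv : ∀ x, HasDerivAt u (u' x) x)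
    (hrec : ∀ x, IsMaxOn u (Iic x) x → M < u x → δ ≤ u' x)
    (hbot : ∀ᶠ y in atBot, u y ≤ M) {x₀ : ℝ} (hx₀ : M < u x₀) :
    Tendsto u atTop atTop := by
  have hmax : ∀ x, x₀ ≤ x → IsMaxOn u (Iic x) x := fun x =>
    isMaxOn_Iic_of_deriv_pos_at_running_max hderiv (fun y hy hM => hδ.trans_le (hrec y hy hM)) hbot hx₀
  have hderiv_ge : ∀ x, x₀ ≤ x → δ ≤ u' x := fun x hx =>
    hrec x (hmax x hx) (hx₀.trans_le (hmax x hx (show x₀ ∈ Iic x from hx)))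
  have hmono : MonotoneOn (fun x => u x - δ * x) (Ici x₀) := by
    refine monotoneOn_of_hasDerivWithinAt_nonneg (convex_Ici x₀)
      (fun x _ => ((hderiv x).sub ((hasDerivAt_id x).const_mul δ)).continuousAt.continuousWithinAt)
      (fun x _ => ((hderiv x).sub ((hasDerivAt_id x).const_mul δ)).hasDerivWithinAt) ?_
    intro x hx
    rw [interior_Ici] at hx
    simpa using hderiv_ge x (le_of_lt hx)
  have hlin : ∀ᶠ x in atTop, u x₀ + δ * (x - x₀) ≤ u x := by
    filter_upwards [eventually_ge_atTop x₀] with x hx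
    have := hmono self_mem_Ici hx hx
    linarith
  refine tendsto_atTop_mono' atTop hlin (tendsto_atTop_add_const_left _ _ ?_)
  exact (tendsto_atTop_add_const_right _ _ tendsto_id).const_mul_atTop hδ

end RunningMaxima

theorem tendsto_atTop_or_atBot_of_tendsto_sq {φ : ℝ → ℝ} (hφ : Continuous φ)
    (h : Tendsto (fun x => φ x ^ 2) atTop atTop) :
    Tendsto φ atTop atTop ∨ Tendsto φ atTop atBot := by
  have habs : Tendsto (fun x => |φ x|) atTop atTop :=
    (Real.tendsto_sqrt_atTop.comp h).congr fun x => Real.sqrt_sq_eq_abs (φ x)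
  obtain ⟨X, hX⟩ := eventually_atTop.1 (habs.eventually_gt_atTop 0)
  have hsign : (∀ x ≥ X, 0 < φ x) ∨ (∀ x ≥ X, φ x < 0) := by
    by_contra! hchange
    obtain ⟨⟨a, ha, hna⟩, ⟨b, hb, hnb⟩⟩ := hchange
    obtain ⟨z, hz, hz0⟩ :=
      isPreconnected_Ici.intermediate_value ha hb hφ.continuousOn ⟨hna, hnb⟩
    simpa [hz0] using hX z hz
  rcases hsign with hpos | hneg
  · exact .inl <| habs.congr' <| eventually_atTop.2 ⟨X, fun x hx => abs_of_pos (hpos x hx)⟩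
  · refine .inr <| (tendsto_neg_atTop_atBot.comp habs).congr' <| eventually_atTop.2 ⟨X, ?_⟩
    intro x hx
    simp [abs_of_neg (hneg x hx)]

theorem stmt9_general (N : ℕ) (c M₀ η : ℝ) (hc : 0 < c) (hM₀ : 1 < M₀)
    (hη : η ∈ Set.Ioo (0:ℝ) 1)
    (κ : Fin N → ℝ) (hκ : ∀ i, 0 < κ i)
    (g : ℝ → (Fin N → ℝ) → ℝ)
    (hG3 : ∀ (s₀ : ℝ) (s : Fin N → ℝ),
      (∀ i, |s i| ≤ |s₀|) → M₀ ≤ |s₀| → |g s₀ s + s₀| ≤ η * |s₀|)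
    (φ φ' : ℝ → ℝ)
    (hderiv : ∀ x, HasDerivAt φ (φ' x) x)
    (heq : ∀ x, c * φ' x = - g (φ x) (fun i => φ (x - κ i)))
    (hbc : Tendsto φ atBot (𝓝 1)) :
    (∀ x, |φ x| ≤ M₀) ∨ Tendsto φ atTop atTop ∨ Tendsto φ atTop atBot := by
  refine or_iff_not_imp_left.2 fun hbdd => ?_
  obtain ⟨x₀, hx₀⟩ := not_forall.1 hbdd
  have hM₀pos : 0 < M₀ := by linarith
  have habsM₀ : |M₀| = M₀ := abs_of_pos hM₀pos
  have hδ : 0 < 2 * (1 - η) * M₀ ^ 2 / c := by have := hη.2; positivity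
  have hsq_deriv : ∀ x, HasDerivAt (fun y => φ y ^ 2) (2 * φ x * φ' x) x := fun x => by
    simpa using (hderiv x).fun_pow 2
  have hrec : ∀ x, IsMaxOn (fun y => φ y ^ 2) (Iic x) x → M₀ ^ 2 < φ x ^ 2 →
      2 * (1 - η) * M₀ ^ 2 / c ≤ 2 * φ x * φ' x := by
    intro x hmax hlt
    have hM : M₀ ≤ |φ x| := by rw [← habsM₀]; exact (sq_lt_sq.1 hlt).le
    have hkey := SatisfiesG3.one_sub_mul_sq_le hG3 hκ (heq x) hmax hM
    rw [div_le_iff₀ hc]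
    nlinarith [hη.2]
  have hbot : ∀ᶠ y in atBot, φ y ^ 2 ≤ M₀ ^ 2 :=
    ((hbc.pow 2).eventually_lt_const (by nlinarith : (1 : ℝ) ^ 2 < M₀ ^ 2)).mono fun _ => le_of_lt
  have hx₀sq : M₀ ^ 2 < φ x₀ ^ 2 := sq_lt_sq.2 (by rw [habsM₀]; exact not_le.1 hx₀)
  exact tendsto_atTop_or_atBot_of_tendsto_sq
    (continuous_iff_continuousAt.2 fun x => (hderiv x).continuousAt)
    (tendsto_atTop_of_le_deriv_at_running_max hδ hsq_deriv hrec hbot hx₀sq)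

/-- Lemma 1.3: under (G3), a globally defined solution with
φ(−∞) = 1 is either bounded by M₀ everywhere or tends to +∞ or −∞ as x → ∞. -/
theorem stmt9 (N : ℕ) (c M₀ η : ℝ) (hc : 0 < c) (hM₀ : 1 < M₀)
    (hη : η ∈ Set.Ioo (0:ℝ) 1)
    (κ : Fin N → ℝ) (hκ : ∀ i, 0 < κ i)
    (g : ℝ → (Fin N → ℝ) → ℝ)
    (hG3 : ∀ (s₀ : ℝ) (s : Fin N → ℝ),
      (∀ i, |s i| ≤ |s₀|) → M₀ ≤ |s₀| → |g s₀ s + s₀| ≤ η * |s₀|)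
    (φ φ' : ℝ → ℝ)
    (hderiv : ∀ x, HasDerivAt φ (φ' x) x) (hcont : Continuous φ')
    (heq : ∀ x, c * φ' x = - g (φ x) (fun i => φ (x - κ i)))
    (hbc : Tendsto φ atBot (𝓝 1)) :
    (∀ x, |φ x| ≤ M₀) ∨ Tendsto φ atTop atTop ∨ Tendsto φ atTop atBot :=
  stmt9_general N c M₀ η hc hM₀ hη κ hκ g hG3 φ φ' hderiv heq hbc
end

section
/- Let g : ℝ^{N+1} → ℝ satisfy (G1.3): there exists β ∈ ℝ^{N+1} with β₀ < 0, βᵢ > 0 (i ≥ 1), Σβᵢ > 0, such that 0 < g(s) whenever 0 < s₀ < sᵢ < 1 for all i = 1,…,N. Let φ solve c·φ'(x) = −g(φ(x), φ(x−κ₁), …, φ(x−κ_N)) with c > 0, κᵢ > 0, φ(−∞) = 1, and suppose φ(x) ∈ (0,1) for all x ≤ x₀. Then φ'(x) < 0 for all x ≤ x₀. -/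
/-!
If `φ' x ≥ 0` for some `x ≤ x₀`, let `ξ` be the leftmost minimum point of `φ` on `(-∞, x]`; it
exists because `φ → 1` at `-∞` while `φ x < 1`. Then `φ' ξ ≥ 0` as well, so the equation and
(G1.3) force `φ (ξ - κ i) ≤ φ ξ` for some `i`, contradicting the choice of `ξ`.
-/

open Real Filter Set Topology

section LeftmostMinimizer

variable {α β : Type*} [ConditionallyCompleteLinearOrder α] [TopologicalSpace α] [OrderTopology α]
  [LinearOrder β] [TopologicalSpace β] [OrderClosedTopology β]

theorem Continuous.exists_isMinOn_Iic_forall_lt_of_tendsto_atBot {f : α → β} {L : β} {a : α}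
    (hf : Continuous f) (hL : Tendsto f atBot (𝓝 L)) (ha : f a < L) :
    ∃ ξ ≤ a, IsMinOn f (Iic a) ξ ∧ ∀ y < ξ, f ξ < f y := by
  obtain ⟨M, hM⟩ := eventually_atBot.1 (hL.eventually (eventually_gt_nhds ha))
  set b := min M a
  have hba : b ≤ a := min_le_right M a
  have hfar : ∀ y < b, f a < f y := fun y hy => hM y (hy.le.trans (min_le_left M a))
  obtain ⟨ξ₀, hξ₀, hmin⟩ := isCompact_Icc.exists_isMinOn (nonempty_Icc.2 hba) hf.continuousOn
  have hmin' : ∀ y ≤ a, f ξ₀ ≤ f y := fun y hy => by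
    rcases le_or_gt b y with h | h
    · exact hmin ⟨h, hy⟩
    · exact (hmin ⟨hba, le_rfl⟩).trans (hfar y h).le
  have hT : IsCompact (Icc b a ∩ f ⁻¹' {f ξ₀}) :=
    isCompact_Icc.inter_right (isClosed_singleton.preimage hf)
  obtain ⟨ξ, ⟨⟨-, hξa⟩, hξ⟩, hleast⟩ := hT.exists_isLeast ⟨ξ₀, hξ₀, rfl⟩
  rw [mem_preimage, mem_singleton_iff] at hξ
  refine ⟨ξ, hξa, fun y hy => hξ ▸ hmin' y hy, fun y hy => ?_⟩
  rw [hξ]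
  rcases le_or_gt b y with h | h
  · refine (hmin' y (hy.le.trans hξa)).lt_of_ne fun he => hy.not_ge ?_
    exact hleast ⟨⟨h, hy.le.trans hξa⟩, he.symm⟩
  · exact (hmin' a le_rfl).trans_lt (hfar y h)

end LeftmostMinimizer

theorem exists_le_of_mul_eq_neg_of_nonneg {N : ℕ} {c d s₀ : ℝ} {s : Fin N → ℝ}
    {g : ℝ → (Fin N → ℝ) → ℝ}
    (hpos : ∀ (s₀ : ℝ) (s : Fin N → ℝ), 0 < s₀ → (∀ i, s₀ < s i) → (∀ i, s i < 1) → 0 < g s₀ s)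
    (hc : 0 < c) (heq : c * d = -g s₀ s) (hd : 0 ≤ d) (hs₀ : 0 < s₀) (hs : ∀ i, s i < 1) :
    ∃ i, s i ≤ s₀ := by
  by_contra! h
  nlinarith [hpos s₀ s hs₀ h hs]

theorem stmt10_general (N : ℕ) (c : ℝ) (hc : 0 < c)
    (κ : Fin N → ℝ) (hκ : ∀ i, 0 < κ i)
    (g : ℝ → (Fin N → ℝ) → ℝ)
    (hG13 : ∃ (β₀ : ℝ) (β : Fin N → ℝ), β₀ < 0 ∧ (∀ i, 0 < β i) ∧
      0 < β₀ + ∑ i, β i ∧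
      ∀ (s₀ : ℝ) (s : Fin N → ℝ),
        0 < s₀ → (∀ i, s₀ < s i) → (∀ i, s i < 1) → 0 < g s₀ s)
    (φ φ' : ℝ → ℝ)
    (hderiv : ∀ x, HasDerivAt φ (φ' x) x)
    (heq : ∀ x, c * φ' x = - g (φ x) (fun i => φ (x - κ i)))
    (hbc : Tendsto φ atBot (𝓝 1))
    (x₀ : ℝ) (hrange : ∀ x, x ≤ x₀ → φ x ∈ Set.Ioo (0:ℝ) 1) :
    ∀ x, x ≤ x₀ → φ' x < 0 := by
  obtain ⟨-, -, -, -, -, hpos⟩ := hG13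
  have hcont : Continuous φ := continuous_iff_continuousAt.2 fun x => (hderiv x).continuousAt
  intro x hx
  by_contra! hnonneg
  obtain ⟨ξ, hξx, hmin, hleft⟩ :=
    hcont.exists_isMinOn_Iic_forall_lt_of_tendsto_atBot hbc (hrange x hx).2
  have hξ_nonneg : 0 ≤ φ' ξ := by
    rcases hξx.eq_or_lt with rfl | hlt
    · exact hnonneg
    · exact ((hmin.isLocalMin (Iic_mem_nhds hlt)).hasDerivAt_eq_zero (hderiv ξ)).ge
  have hdelay : ∀ i, ξ - κ i ≤ x₀ := fun i => by linarith [hκ i]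
  obtain ⟨i, hi⟩ := exists_le_of_mul_eq_neg_of_nonneg hpos hc (heq ξ) hξ_nonneg
    (hrange ξ (hξx.trans hx)).1 fun i => (hrange _ (hdelay i)).2
  exact (hleft _ (sub_lt_self ξ (hκ i))).not_ge hi

/-- Lemma 3.1: under (G1.3), a solution with φ(−∞) = 1 which
stays in (0,1) up to x₀ is strictly decreasing on (−∞, x₀]. -/
theorem stmt10 (N : ℕ) (hN : 0 < N) (c : ℝ) (hc : 0 < c)
    (κ : Fin N → ℝ) (hκ : ∀ i, 0 < κ i)
    (g : ℝ → (Fin N → ℝ) → ℝ)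
    (hG13 : ∃ (β₀ : ℝ) (β : Fin N → ℝ), β₀ < 0 ∧ (∀ i, 0 < β i) ∧
      0 < β₀ + ∑ i, β i ∧
      ∀ (s₀ : ℝ) (s : Fin N → ℝ),
        0 < s₀ → (∀ i, s₀ < s i) → (∀ i, s i < 1) → 0 < g s₀ s)
    (φ φ' : ℝ → ℝ)
    (hderiv : ∀ x, HasDerivAt φ (φ' x) x)
    (heq : ∀ x, c * φ' x = - g (φ x) (fun i => φ (x - κ i)))
    (hbc : Tendsto φ atBot (𝓝 1))
    (x₀ : ℝ) (hrange : ∀ x, x ≤ x₀ → φ x ∈ Set.Ioo (0:ℝ) 1) :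
    ∀ x, x ≤ x₀ → φ' x < 0 :=
  stmt10_general N c hc κ hκ g hG13 φ φ' hderiv heq hbc x₀ hrange
end
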